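/- Let Γ₀ = {p, ~p∨r, q, ~q∨s, ~p}, where p, q, r, s are distinct propositional variables. Then U(Γ₀) = {p ∧ ~p}; moreover there is a finite Δ ⊆ Ω with Δ ∩ U(Γ₀) = ∅ and Γ₀ ⊢_CLuN s ∨ Dab(Δ) (so s is finally ACLuN1-derivable from Γ₀), but there is no finite Δ ⊆ Ω with Δ ∩ U(Γ₀) = ∅ and Γ₀ ⊢_CLuN r ∨ Dab(Δ) (so r is not finally ACLuN1-derivable from Γ₀). -/

import Mathlib

/-- Propositional formulas: variables, ⊥, ⊃, ∧, ∨, ≡, and paraconsistent negation ~. -/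
inductive Formula : Type
  | var : ℕ → Formula
  | bot : Formula
  | imp : Formula → Formula → Formula
  | conj : Formula → Formula → Formula
  | disj : Formula → Formula → Formula
  | equiv : Formula → Formula → Formula
  | pneg : Formula → Formula
  deriving DecidableEq

namespace Formula

/-- Classical negation: ¬A := A ⊃ ⊥. -/
def neg (A : Formula) : Formula := imp A bot

end Formula

/-- Hilbert-style derivability. `cl = false` gives CLuN (full positive classical logic,
including Peirce's law, plus ⊥ ⊃ A and A ∨ ~A, with modus ponens as only rule);
`cl = true` additionally has the axiom schema (A ∧ ~A) ⊃ B, giving CL. -/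
inductive Deriv (cl : Bool) (Γ : Set Formula) : Formula → Prop
  | prem {A : Formula} : A ∈ Γ → Deriv cl Γ A
  | axK (A B : Formula) : Deriv cl Γ (A.imp (B.imp A))
  | axS (A B C : Formula) : Deriv cl Γ ((A.imp (B.imp C)).imp ((A.imp B).imp (A.imp C)))
  | axPeirce (A B : Formula) : Deriv cl Γ (((A.imp B).imp A).imp A)
  | axAndElimL (A B : Formula) : Deriv cl Γ ((A.conj B).imp A)
  | axAndElimR (A B : Formula) : Deriv cl Γ ((A.conj B).imp B)
  | axAndIntro (A B : Formula) : Deriv cl Γ (A.imp (B.imp (A.conj B)))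
  | axOrIntroL (A B : Formula) : Deriv cl Γ (A.imp (A.disj B))
  | axOrIntroR (A B : Formula) : Deriv cl Γ (B.imp (A.disj B))
  | axOrElim (A B C : Formula) : Deriv cl Γ ((A.imp C).imp ((B.imp C).imp ((A.disj B).imp C)))
  | axIffElimL (A B : Formula) : Deriv cl Γ ((A.equiv B).imp (A.imp B))
  | axIffElimR (A B : Formula) : Deriv cl Γ ((A.equiv B).imp (B.imp A))
  | axIffIntro (A B : Formula) : Deriv cl Γ ((A.imp B).imp ((B.imp A).imp (A.equiv B)))
  | axBot (A : Formula) : Deriv cl Γ (Formula.bot.imp A)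
  | axEM (A : Formula) : Deriv cl Γ (A.disj A.pneg)
  | axCL (A B : Formula) : cl = true → Deriv cl Γ ((A.conj A.pneg).imp B)
  | mp {A B : Formula} : Deriv cl Γ (A.imp B) → Deriv cl Γ A → Deriv cl Γ B

/-- Γ ⊢_CLuN A -/
def CLuN (Γ : Set Formula) (A : Formula) : Prop := Deriv false Γ A

/-- Γ ⊢_CL A -/
def CL (Γ : Set Formula) (A : Formula) : Prop := Deriv true Γ A

/-- The set of abnormalities Ω: all formulas of the form A ∧ ~A. -/
def Omega : Set Formula := {F | ∃ A : Formula, F = A.conj A.pneg}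

/-- An arbitrary (noncomputable) linear order on formulas, used only to pick a canonical
ordering of the disjuncts of a Dab-formula. -/
noncomputable instance : LinearOrder Formula :=
  @linearOrderOfSTO Formula WellOrderingRel _ (Classical.decRel _)

/-- Disjunction of a list of formulas; the empty disjunction is ⊥. -/
def listDisj : List Formula → Formula
  | [] => Formula.bot
  | [A] => A
  | A :: B :: rest => A.disj (listDisj (B :: rest))

/-- Dab(Δ): the disjunction of the members of the finite set Δ (by convention Dab(∅) := ⊥). -/
noncomputable def Dab (Δ : Finset Formula) : Formula := listDisj (Δ.sort (· ≤ ·))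

/-- Dab(Δ) is a minimal Dab-consequence of Γ: Δ is finite and nonempty, Δ ⊆ Ω,
Γ ⊢_CLuN Dab(Δ), and no nonempty Δ' ⊊ Δ has Γ ⊢_CLuN Dab(Δ'). -/
def MinDabConsequence (Γ : Set Formula) (Δ : Finset Formula) : Prop :=
  Δ.Nonempty ∧ ↑Δ ⊆ Omega ∧ CLuN Γ (Dab Δ) ∧
    ∀ Δ' : Finset Formula, Δ'.Nonempty → Δ' ⊂ Δ → ¬ CLuN Γ (Dab Δ')

/-- U(Γ): the set of formulas unreliable with respect to Γ. -/
def U (Γ : Set Formula) : Set Formula :=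
  {A | ∃ Δ : Finset Formula, MinDabConsequence Γ Δ ∧ A ∈ Δ}

/-- Γ₀ = {p, ~p∨r, q, ~q∨s, ~p}. -/
def Gamma0 (p q r s : ℕ) : Set Formula :=
  {Formula.var p,
   (Formula.var p).pneg.disj (Formula.var r),
   Formula.var q,
   (Formula.var q).pneg.disj (Formula.var s),
   (Formula.var p).pneg}

/-!
CLuN is sound for two-valued valuations in which `~A` is true whenever `A` is false and
arbitrary otherwise. Make every variable except `r` true and let `~B` hold for true `B` only when
`B = p`. This valuation satisfies Γ₀ and falsifies every abnormality except `p ∧ ~p`, so every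
Dab-consequence of Γ₀ contains `p ∧ ~p`; since `p ∧ ~p` is itself derivable, U(Γ₀) = {p ∧ ~p}.
The same valuation falsifies `r ∨ Dab(Δ)` whenever `p ∧ ~p ∉ Δ`. On the other hand
`q, ~q ∨ s ⊢ s ∨ (q ∧ ~q)`, and `q ∧ ~q` is reliable.
-/

namespace Formula

abbrev abn (A : Formula) : Formula := A.conj A.pneg

/-- Two-valued semantics of CLuN: `v` interprets the variables, and `~A` is true whenever `A`
is false, while for true `A` its value is the free choice `f A`. -/
def eval (v : ℕ → Bool) (f : Formula → Bool) : Formula → Bool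
  | var n => v n
  | bot => false
  | imp A B => !eval v f A || eval v f B
  | conj A B => eval v f A && eval v f B
  | disj A B => eval v f A || eval v f B
  | equiv A B => eval v f A == eval v f B
  | pneg A => if eval v f A then f A else true

theorem eval_abn_eq_true_iff (v : ℕ → Bool) (A B : Formula) :
    (abn B).eval v (fun C => decide (C = A)) = true ↔
      B.eval v (fun C => decide (C = A)) ∧ B = A := by
  simp only [eval]
  cases B.eval v _ <;> simp

end Formula

open Formula

section Semantics

variable (v : ℕ → Bool) (f : Formula → Bool)

theorem CLuN.eval_eq_true {Γ : Set Formula} {A : Formula} (h : CLuN Γ A)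
    (hΓ : ∀ B ∈ Γ, B.eval v f = true) : A.eval v f = true := by
  induction h with
  | prem hmem => exact hΓ _ hmem
  | axCL _ _ hcl => cases hcl
  | mp _ _ ihAB ihA => simpa [eval, ihA] using ihAB
  | _ => simp [eval] <;> grind

theorem eval_listDisj_eq_false {l : List Formula} (hl : ∀ B ∈ l, B.eval v f = false) :
    (listDisj l).eval v f = false := by
  induction l using listDisj.induct with
  | case1 => rfl
  | case2 A => simpa [listDisj] using hl
  | case3 A B rest ih => simp_all [listDisj, eval]

theorem eval_Dab_eq_false {Δ : Finset Formula} (hΔ : ∀ B ∈ Δ, B.eval v f = false) :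
    (Dab Δ).eval v f = false :=
  eval_listDisj_eq_false v f fun B hB => hΔ B ((Finset.mem_sort _).mp hB)

end Semantics

theorem eval_Dab_eq_false_of_abn_notMem (v : ℕ → Bool) {A : Formula} {Δ : Finset Formula}
    (hΔ : ↑Δ ⊆ Omega) (hA : A.abn ∉ Δ) : (Dab Δ).eval v (fun C => decide (C = A)) = false := by
  refine eval_Dab_eq_false _ _ fun B hB => ?_
  obtain ⟨C, rfl⟩ := hΔ hB
  rw [← Bool.not_eq_true, eval_abn_eq_true_iff]
  rintro ⟨-, rfl⟩
  exact hA hB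

theorem abn_mem_of_CLuN_Dab {Γ : Set Formula} (v : ℕ → Bool) {A : Formula} {Δ : Finset Formula}
    (hΓ : ∀ B ∈ Γ, B.eval v (fun C => decide (C = A)) = true) (hΔ : ↑Δ ⊆ Omega)
    (h : CLuN Γ (Dab Δ)) : A.abn ∈ Δ := by
  by_contra hA
  simpa [eval_Dab_eq_false_of_abn_notMem v hΔ hA] using h.eval_eq_true _ _ hΓ

namespace Deriv

variable {cl : Bool} {Γ : Set Formula} {A B C : Formula}

theorem imp_trans (hAB : Deriv cl Γ (A.imp B)) (hBC : Deriv cl Γ (B.imp C)) :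
    Deriv cl Γ (A.imp C) :=
  .mp (.mp (.axS A B C) (.mp (.axK (B.imp C) A) hBC)) hAB

theorem abn_of_pneg (hA : Deriv cl Γ A) (hnA : Deriv cl Γ A.pneg) : Deriv cl Γ A.abn :=
  .mp (.mp (.axAndIntro _ _) hA) hnA

/-- Disjunctive syllogism holds in CLuN up to the abnormality of the cancelled formula. -/
theorem disj_abn_of_pneg_disj (hA : Deriv cl Γ A) (h : Deriv cl Γ (A.pneg.disj B)) :
    Deriv cl Γ (B.disj A.abn) :=
  .mp (.mp (.mp (.axOrElim _ _ _) ((Deriv.mp (.axAndIntro _ _) hA).imp_trans (.axOrIntroR _ _)))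
    (.axOrIntroL _ _)) h

end Deriv

theorem Dab_singleton (A : Formula) : Dab {A} = A := by
  simp [Dab, listDisj]

theorem U_eq_singleton {Γ : Set Formula} {A : Formula} (hA : A ∈ Omega) (hder : CLuN Γ A)
    (hmem : ∀ Δ : Finset Formula, ↑Δ ⊆ Omega → CLuN Γ (Dab Δ) → A ∈ Δ) : U Γ = {A} := by
  have hDab : CLuN Γ (Dab {A}) := by rwa [Dab_singleton]
  ext B
  constructor
  · rintro ⟨Δ, ⟨-, hΔ, hΔder, hmin⟩, hB⟩
    by_contra hBA
    refine hmin {A} (Finset.singleton_nonempty A) ?_ hDab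
    exact Finset.ssubset_iff_subset_ne.mpr ⟨by simpa using hmem Δ hΔ hΔder,
      fun h => hBA (by simpa [← h] using hB)⟩
  · rintro rfl
    refine ⟨{B}, ⟨Finset.singleton_nonempty B, by simpa using hA, hDab, ?_⟩,
      Finset.mem_singleton_self B⟩
    exact fun Δ' hne hss _ => hne.ne_empty (Finset.ssubset_singleton_iff.mp hss)

section Gamma0

variable {p q r s : ℕ}

theorem Gamma0_eval (hpr : p ≠ r) (hqr : q ≠ r) (hrs : r ≠ s) :
    ∀ B ∈ Gamma0 p q r s,
      B.eval (fun n => decide (n ≠ r)) (fun C => decide (C = var p)) = true := by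
  rintro B (rfl | rfl | rfl | rfl | rfl) <;> simp [eval, hpr, hqr, hrs.symm]

theorem U_Gamma0 (hpr : p ≠ r) (hqr : q ≠ r) (hrs : r ≠ s) :
    U (Gamma0 p q r s) = {(var p).abn} :=
  U_eq_singleton ⟨var p, rfl⟩ (.abn_of_pneg (.prem (by simp [Gamma0])) (.prem (by simp [Gamma0])))
    fun _ hΔ h => abn_mem_of_CLuN_Dab _ (Gamma0_eval hpr hqr hrs) hΔ h

end Gamma0

theorem Gamma0_analysis_general (p q r s : ℕ)
    (hpq : p ≠ q) (hpr : p ≠ r)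
    (hqr : q ≠ r) (hrs : r ≠ s) :
    U (Gamma0 p q r s) = {(Formula.var p).conj (Formula.var p).pneg} ∧
    (∃ Δ : Finset Formula, ↑Δ ⊆ Omega ∧ (↑Δ ∩ U (Gamma0 p q r s) : Set Formula) = ∅ ∧
      CLuN (Gamma0 p q r s) ((Formula.var s).disj (Dab Δ))) ∧
    ¬ (∃ Δ : Finset Formula, ↑Δ ⊆ Omega ∧ (↑Δ ∩ U (Gamma0 p q r s) : Set Formula) = ∅ ∧
      CLuN (Gamma0 p q r s) ((Formula.var r).disj (Dab Δ))) := by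
  have hU := U_Gamma0 hpr hqr hrs
  refine ⟨hU, ⟨{(var q).abn}, by simpa using ⟨var q, rfl⟩, by simp [hU, hpq.symm], ?_⟩, ?_⟩
  · rw [Dab_singleton]
    exact .disj_abn_of_pneg_disj (.prem (by simp [Gamma0])) (.prem (by simp [Gamma0]))
  · rintro ⟨Δ, hΔ, hdisj, h⟩
    have hpΔ : (var p).abn ∉ Δ := fun hp =>
      (Set.eq_empty_iff_forall_notMem.mp hdisj) _ ⟨hp, hU ▸ rfl⟩
    simpa [eval, eval_Dab_eq_false_of_abn_notMem _ hΔ hpΔ] using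
      h.eval_eq_true _ _ (Gamma0_eval hpr hqr hrs)

/-- For pairwise distinct variables p, q, r, s: U(Γ₀) = {p ∧ ~p}; s is finally
ACLuN1-derivable from Γ₀ but r is not. -/
theorem Gamma0_analysis (p q r s : ℕ)
    (hpq : p ≠ q) (hpr : p ≠ r) (hps : p ≠ s)
    (hqr : q ≠ r) (hqs : q ≠ s) (hrs : r ≠ s) :
    U (Gamma0 p q r s) = {(Formula.var p).conj (Formula.var p).pneg} ∧
    (∃ Δ : Finset Formula, ↑Δ ⊆ Omega ∧ (↑Δ ∩ U (Gamma0 p q r s) : Set Formula) = ∅ ∧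
      CLuN (Gamma0 p q r s) ((Formula.var s).disj (Dab Δ))) ∧
    ¬ (∃ Δ : Finset Formula, ↑Δ ⊆ Omega ∧ (↑Δ ∩ U (Gamma0 p q r s) : Set Formula) = ∅ ∧
      CLuN (Gamma0 p q r s) ((Formula.var r).disj (Dab Δ))) :=
  Gamma0_analysis_general p q r s hpq hpr hqr hrs
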